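/- arXiv:2307.00423 — 6 statements merged into one kernel-verified Lean document; each statement's English description precedes it below -/
import Mathlib

section
/- Let m ≥ 1 and n ≥ 2 be integers. In the polynomial ring ℚ[t_1,…,t_{n−1}], the sequence of n−1 elements (t_2^m − t_1^m, t_3^m − t_2^m, …, t_{n−1}^m − t_{n−2}^m, −t_1^m t_2^m ⋯ t_{n−2}^m t_{n−1}^{2m}) is a regular sequence. -/
/-!
Write `n - 1 = k + 1` and `t_i = X i` for `i ≤ k`. Each `t_{i+1}^m - t_i^m` is monic in the
variable `t_{i+1}`, which the earlier elements do not involve, so the first `k` elements form a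
regular sequence. Modulo them every `t_j^m` is congruent to `t_k^m`, so every variable, and hence
the last element (a signed monomial), is regular as soon as `t_k` is. The quotient by `(t_j^m - t_k^m)_{j<k}` arises from `ℚ[t_k]` by
adjoining, one at a time, roots of the monic polynomials `T^m - t_k^m`; it is therefore free over
`ℚ[t_k]`, on which `t_k` acts injectively.
-/

open MvPolynomial
open scoped Polynomial

section Quotient

variable {R S : Type*} [CommRing R] [CommRing S]

theorem isSMulRegular_quotient_of_ker_eq (φ : R →+* S) {I : Ideal R} (hI : RingHom.ker φ = I)
    {a : R} (ha : IsSMulRegular S (φ a)) : IsSMulRegular (R ⧸ I) a := by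
  rw [isSMulRegular_quotient_iff_mem_of_smul_mem]
  intro x hx
  rw [← hI, RingHom.mem_ker] at hx ⊢
  rw [smul_eq_mul, map_mul] at hx
  exact ha.right_eq_zero_of_smul hx

theorem RingEquiv.isSMulRegular_quotient_of_map (e : R ≃+* S) {I : Ideal R} {a : R}
    (ha : IsSMulRegular (S ⧸ I.map e) (e a)) : IsSMulRegular (R ⧸ I) a := by
  rw [isSMulRegular_quotient_iff_mem_of_smul_mem] at ha ⊢
  intro x hx
  obtain ⟨x', hx', hx'x⟩ := (Ideal.mem_map_of_equiv e (e x)).mp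
    (ha (e x) (by rw [smul_eq_mul, ← map_mul]; exact Ideal.mem_map_of_mem _ hx))
  rwa [← e.injective hx'x]

theorem IsSMulRegular.of_sub_mem {I : Ideal R} {a b : R} (ha : IsSMulRegular (R ⧸ I) a)
    (hab : a - b ∈ I) : IsSMulRegular (R ⧸ I) b := by
  rw [← isSMulRegular_algebraMap_iff (R ⧸ I)] at ha ⊢
  rwa [Ideal.Quotient.algebraMap_eq, ← Ideal.Quotient.eq.mpr hab]

theorem Ideal.span_range_succ_sub_castSucc {k : ℕ} (a : Fin (k + 1) → R) :
    Ideal.span (Set.range fun j : Fin k => a j.succ - a j.castSucc) =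
      Ideal.span (Set.range fun j : Fin k => a j.castSucc - a (Fin.last k)) := by
  have h₁ : ∀ i, a i - a (Fin.last k) ∈
      Ideal.span (Set.range fun j : Fin k => a j.succ - a j.castSucc) := by
    intro i
    induction i using Fin.reverseInduction with
    | last => simp
    | cast j ih =>
      simpa using Ideal.sub_mem _ ih (Ideal.subset_span ⟨j, rfl⟩)
  have h₂ : ∀ i, a i - a (Fin.last k) ∈
      Ideal.span (Set.range fun j : Fin k => a j.castSucc - a (Fin.last k)) := by
    intro i
    induction i using Fin.lastCases with
    | last => simp
    | cast j => exact Ideal.subset_span ⟨j, rfl⟩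
  apply le_antisymm <;> rw [Ideal.span_le] <;> rintro _ ⟨j, rfl⟩
  · simpa using Ideal.sub_mem _ (h₂ j.succ) (h₂ j.castSucc)
  · exact h₁ _

theorem Ideal.ofList_ofFn {k : ℕ} (f : Fin k → R) :
    Ideal.ofList (List.ofFn f) = Ideal.span (Set.range f) :=
  congrArg Ideal.span (Set.ext fun _ => List.mem_ofFn)

theorem isWeaklyRegular_ofFn_iff {k : ℕ} (f : Fin k → R) :
    RingTheory.Sequence.IsWeaklyRegular R (List.ofFn f) ↔
      ∀ i : Fin k,
        IsSMulRegular (R ⧸ Ideal.span (Set.range (Fin.take i i.isLt.le f))) (f i) := by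
  have hprefix : ∀ i : Fin k, (Ideal.ofList ((List.ofFn f).take i) • ⊤ : Submodule R R) =
      Ideal.span (Set.range (Fin.take i i.isLt.le f)) := fun i => by
    rw [← Fin.ofFn_take_eq_take_ofFn i.isLt.le, Ideal.ofList_ofFn, smul_eq_mul, Ideal.mul_top]
  rw [RingTheory.Sequence.isWeaklyRegular_iff]
  constructor
  · intro h i
    have hi := h i (by simp)
    rwa [hprefix i, List.getElem_ofFn] at hi
  · intro h i hi
    have hik : i < k := by simpa using hi
    rw [hprefix ⟨i, hik⟩, List.getElem_ofFn]
    exact h ⟨i, hik⟩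

end Quotient

section Polynomial

variable {T : Type*} [CommRing T]

theorem isSMulRegular_quotient_map_C_of_monic (I : Ideal T) {f : T[X]}
    (hf : (f.map (Ideal.Quotient.mk I)).Monic) :
    IsSMulRegular (T[X] ⧸ I.map Polynomial.C) f :=
  isSMulRegular_quotient_of_ker_eq (Polynomial.mapRingHom (Ideal.Quotient.mk I))
    (by rw [Polynomial.ker_mapRingHom, Ideal.mk_ker]) hf.isRegular.left.isSMulRegular

theorem isSMulRegular_C_quotient_sup_span_of_monic {I : Ideal T} {b : T}
    (hb : IsSMulRegular (T ⧸ I) b) {q : T[X]} (hq : (q.map (Ideal.Quotient.mk I)).Monic) :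
    IsSMulRegular (T[X] ⧸ (I.map Polynomial.C ⊔ Ideal.span {q})) (Polynomial.C b) := by
  set q' := q.map (Ideal.Quotient.mk I)
  -- `T[X] ⧸ (I[X] ⊔ (q)) ≅ (T ⧸ I)[X] ⧸ (q')`, free over `T ⧸ I` since `q'` is monic.
  let φ := (AdjoinRoot.mk q').comp (Polynomial.mapRingHom (Ideal.Quotient.mk I))
  have hker : RingHom.ker φ = I.map Polynomial.C ⊔ Ideal.span {q} := by
    have hmk : RingHom.ker (AdjoinRoot.mk q') = Ideal.span {q'} := by
      ext; rw [RingHom.mem_ker, AdjoinRoot.mk_eq_zero, Ideal.mem_span_singleton]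
    have hspan : Ideal.span {q'} =
        (Ideal.span {q}).map (Polynomial.mapRingHom (Ideal.Quotient.mk I)) := by
      rw [Ideal.map_span, Set.image_singleton]; rfl
    rw [← RingHom.comap_ker, hmk, hspan, Ideal.comap_map_of_surjective _
      (Polynomial.map_surjective _ Ideal.Quotient.mk_surjective), ← RingHom.ker_eq_comap_bot,
      Polynomial.ker_mapRingHom, Ideal.mk_ker, sup_comm]
  refine isSMulRegular_quotient_of_ker_eq φ hker ?_
  have : Module.Free (T ⧸ I) (AdjoinRoot q') := .of_basis (AdjoinRoot.powerBasis' hq).basis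
  have hφ :
      φ (Polynomial.C b) = algebraMap (T ⧸ I) (AdjoinRoot q') (Ideal.Quotient.mk I b) := by
    simp [φ]
  rw [hφ, isSMulRegular_algebraMap_iff]
  rw [← isSMulRegular_algebraMap_iff (T ⧸ I), Ideal.Quotient.algebraMap_eq] at hb
  exact Module.Flat.isSMulRegular_of_isRegular
    ((Commute.isRegular_iff (Commute.all _)).mpr hb.isLeftRegular)

theorem isSMulRegular_C_quotient_span_range_X_pow_sub_C {b : T} (hb : IsSMulRegular T b)
    {m : ℕ} (hm : m ≠ 0) (n : ℕ) :
    IsSMulRegular (MvPolynomial (Fin n) T ⧸ Ideal.span (Set.range fun i => X i ^ m - C (b ^ m)))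
      (C b : MvPolynomial (Fin n) T) := by
  induction n with
  | zero =>
    rw [Set.range_eq_empty, Ideal.span_empty]
    have he : isEmptyAlgEquiv T (Fin 0) (C b) = b := (isEmptyAlgEquiv T (Fin 0)).commutes b
    exact isSMulRegular_quotient_of_ker_eq (isEmptyAlgEquiv T (Fin 0) : _ →+* T)
      (RingHom.ker_equiv _) (by rwa [RingHom.coe_coe, he])
  | succ n ih =>
    let e := (finSuccEquiv T n).toRingEquiv
    have he : finSuccEquiv T n (C b) = Polynomial.C (C b) := (finSuccEquiv T n).commutes b
    let q : Polynomial (MvPolynomial (Fin n) T) := Polynomial.X ^ m - Polynomial.C (C (b ^ m))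
    have hgen : (e ∘ fun i => X i ^ m - C (b ^ m)) =
        Fin.cons q fun i => Polynomial.C (X i ^ m - C (b ^ m)) := by
      refine funext (Fin.cases ?_ fun i => ?_) <;>
        simp [q, he, e, finSuccEquiv_X_zero, finSuccEquiv_X_succ]
    have hmap : (Ideal.span (Set.range fun i => X i ^ m - C (b ^ m))).map e =
        (Ideal.span (Set.range fun i => X i ^ m - C (b ^ m))).map Polynomial.C ⊔
          Ideal.span {q} := by
      rw [Ideal.map_span, ← Set.range_comp, hgen, Fin.range_cons, Ideal.span_insert,
        Ideal.map_span, ← Set.range_comp, sup_comm]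
      rfl
    have hq : (q.map (Ideal.Quotient.mk
        (Ideal.span (Set.range fun i => X i ^ m - C (b ^ m))))).Monic := by
      rw [Polynomial.map_sub, Polynomial.map_pow, Polynomial.map_X, Polynomial.map_C]
      exact Polynomial.monic_X_pow_sub_C _ hm
    refine e.isSMulRegular_quotient_of_map ?_
    rw [hmap, show e (C b) = Polynomial.C (C b) from he]
    exact isSMulRegular_C_quotient_sup_span_of_monic ih hq

end Polynomial

section IsolateVar

variable {K σ : Type*} [CommSemiring K] [DecidableEq σ]

noncomputable def isolateVar (y : σ) :
    MvPolynomial σ K ≃+* Polynomial (MvPolynomial {j : σ // j ≠ y} K) :=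
  ((renameEquiv K (Equiv.optionSubtypeNe y).symm).trans (optionEquivLeft K _)).toRingEquiv

theorem isolateVar_X_self (y : σ) : isolateVar y (X y : MvPolynomial σ K) = Polynomial.X := by
  simp [isolateVar, optionEquivLeft_X_none]

theorem isolateVar_X_of_ne {y j : σ} (hj : j ≠ y) :
    isolateVar y (X j : MvPolynomial σ K) = Polynomial.C (X ⟨j, hj⟩) := by
  simp [isolateVar, Equiv.optionSubtypeNe_symm_of_ne hj, optionEquivLeft_X_some]

theorem isolateVar_rename_val (y : σ) (p : MvPolynomial {j : σ // j ≠ y} K) :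
    isolateVar y (rename Subtype.val p) = Polynomial.C p := by
  induction p using MvPolynomial.induction_on with
  | C a => simp [isolateVar, optionEquivLeft_C]
  | add p q hp hq => rw [map_add, map_add, hp, hq, map_add]
  | mul_X p j hp => rw [map_mul, map_mul, hp, rename_X, isolateVar_X_of_ne j.2, ← map_mul]

end IsolateVar

section Chain

variable {K : Type*} [CommRing K] {m : ℕ}

theorem X_pow_sub_X_pow_mem_range_rename {σ : Type*} {y a b : σ} (ha : a ≠ y) (hb : b ≠ y) :
    (X a ^ m - X b ^ m : MvPolynomial σ K) ∈
      Set.range (rename (R := K) (Subtype.val : {j : σ // j ≠ y} → σ)) :=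
  ⟨X ⟨a, ha⟩ ^ m - X ⟨b, hb⟩ ^ m, by simp⟩

theorem isSMulRegular_X_pow_sub_X_pow_quotient_span {σ : Type*} [DecidableEq σ] (hm : m ≠ 0)
    {y z : σ} (hzy : z ≠ y) {G : Set (MvPolynomial σ K)}
    (hG : G ⊆ Set.range (rename (R := K) (Subtype.val : {j : σ // j ≠ y} → σ))) :
    IsSMulRegular (MvPolynomial σ K ⧸ Ideal.span G) (X y ^ m - X z ^ m : MvPolynomial σ K) := by
  obtain ⟨G, rfl⟩ := Set.subset_range_iff_exists_image_eq.mp hG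
  refine (isolateVar y).isSMulRegular_quotient_of_map ?_
  have hmap : (Ideal.span (rename Subtype.val '' G)).map (isolateVar y) =
      (Ideal.span G).map
        (Polynomial.C : _ →+* Polynomial (MvPolynomial {j : σ // j ≠ y} K)) := by
    rw [Ideal.map_span, Ideal.map_span, Set.image_image]
    simp only [isolateVar_rename_val]
  rw [hmap, map_sub, map_pow, map_pow, isolateVar_X_self, isolateVar_X_of_ne hzy,
    ← Polynomial.C_pow]
  refine isSMulRegular_quotient_map_C_of_monic _ ?_
  rw [Polynomial.map_sub, Polynomial.map_pow, Polynomial.map_X, Polynomial.map_C]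
  exact Polynomial.monic_X_pow_sub_C _ hm

theorem isSMulRegular_X_last_quotient_span_range_X_pow_sub (hm : m ≠ 0) (k : ℕ) :
    IsSMulRegular (MvPolynomial (Fin (k + 1)) K ⧸
        Ideal.span (Set.range fun j : Fin k => X (R := K) j.castSucc ^ m - X (Fin.last k) ^ m))
      (X (Fin.last k) : MvPolynomial (Fin (k + 1)) K) := by
  let e := ((renameEquiv K finSuccEquivLast).trans (optionEquivRight K (Fin k))).toRingEquiv
  have he : ∀ i, e (X i) = optionEquivRight K (Fin k) (X (finSuccEquivLast i)) := fun i => by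
    simp [e]
  have hmap :
      (Ideal.span (Set.range fun j : Fin k => X j.castSucc ^ m - X (Fin.last k) ^ m)).map e =
        Ideal.span (Set.range fun j => X j ^ m - C (Polynomial.X ^ m)) := by
    rw [Ideal.map_span, ← Set.range_comp]
    congr 2
    funext j
    simp [he]
  have hX : e (X (Fin.last k)) = C Polynomial.X := by simp [he]
  refine e.isSMulRegular_quotient_of_map ?_
  rw [hmap, hX]
  exact isSMulRegular_C_quotient_span_range_X_pow_sub_C
    Polynomial.monic_X.isRegular.left.isSMulRegular hm k

theorem isWeaklyRegular_ofFn_X_succ_pow_sub_X_castSucc_pow (hm : m ≠ 0) (k : ℕ) :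
    RingTheory.Sequence.IsWeaklyRegular (MvPolynomial (Fin (k + 1)) K)
      (List.ofFn fun j : Fin k => X (R := K) j.succ ^ m - X j.castSucc ^ m) := by
  rw [isWeaklyRegular_ofFn_iff]
  intro i
  refine isSMulRegular_X_pow_sub_X_pow_quotient_span hm (Fin.castSucc_lt_succ (i := i)).ne ?_
  rintro _ ⟨j, rfl⟩
  have hj : (j : ℕ) < i := j.isLt
  exact X_pow_sub_X_pow_mem_range_rename (a := (Fin.castLE _ j).succ)
    (b := (Fin.castLE _ j).castSucc) (by simp [Fin.ext_iff]; omega) (by simp [Fin.ext_iff]; omega)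

theorem isSMulRegular_X_quotient_span_range_X_succ_pow_sub (hm : m ≠ 0) {k : ℕ}
    (i : Fin (k + 1)) :
    IsSMulRegular (MvPolynomial (Fin (k + 1)) K ⧸
        Ideal.span (Set.range fun j : Fin k => X (R := K) j.succ ^ m - X j.castSucc ^ m))
      (X i : MvPolynomial (Fin (k + 1)) K) := by
  rw [Ideal.span_range_succ_sub_castSucc (fun j => X j ^ m),
    ← IsSMulRegular.pow_iff (Nat.pos_of_ne_zero hm)]
  have hlast := (isSMulRegular_X_last_quotient_span_range_X_pow_sub (K := K) hm k).pow m
  induction i using Fin.lastCases with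
  | last => exact hlast
  | cast j =>
    exact hlast.of_sub_mem (by rw [← neg_sub]; exact neg_mem (Ideal.subset_span ⟨j, rfl⟩))

theorem isWeaklyRegular_ofFn_X_succ_pow_sub_X_castSucc_pow_append (hm : m ≠ 0) (k : ℕ)
    (s : Finset (Fin (k + 1))) (e : ℕ) :
    RingTheory.Sequence.IsWeaklyRegular (MvPolynomial (Fin (k + 1)) K)
      (List.ofFn (fun j : Fin k => X (R := K) j.succ ^ m - X j.castSucc ^ m) ++
        [-((∏ j ∈ s, X (R := K) j ^ m) * X (Fin.last k) ^ e)]) := by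
  rw [RingTheory.Sequence.isWeaklyRegular_append_iff,
    RingTheory.Sequence.isWeaklyRegular_singleton_iff, Ideal.ofList_ofFn, smul_eq_mul,
    Ideal.mul_top]
  refine ⟨isWeaklyRegular_ofFn_X_succ_pow_sub_X_castSucc_pow hm k, ?_⟩
  have hX := isSMulRegular_X_quotient_span_range_X_succ_pow_sub (K := K) (k := k) hm
  rw [neg_eq_neg_one_mul]
  refine (isUnit_one.neg.isSMulRegular _).mul (.mul ?_ ((hX _).pow e))
  exact Finset.prod_induction _ _ (fun _ _ => IsSMulRegular.mul) (IsSMulRegular.one _)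
    fun j _ => (hX j).pow m

end Chain

open MvPolynomial in
theorem stmt0_general (m n : ℕ) (hm : 1 ≤ m) :
    RingTheory.Sequence.IsWeaklyRegular (MvPolynomial (Fin (n - 1)) ℚ)
      (List.ofFn fun i : Fin (n - 1) =>
        if h : (i : ℕ) + 1 < n - 1 then
          X (⟨(i : ℕ) + 1, h⟩ : Fin (n - 1)) ^ m - X i ^ m
        else
          -((∏ j ∈ Finset.univ.filter (fun j : Fin (n - 1) => (j : ℕ) + 1 < n - 1),
                (X j : MvPolynomial (Fin (n - 1)) ℚ) ^ m)
              * X i ^ (2 * m))) := by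
  have hm0 : m ≠ 0 := Nat.one_le_iff_ne_zero.mp hm
  generalize n - 1 = v
  cases v with
  | zero => simp
  | succ k =>
    rw [List.ofFn_succ', List.concat_eq_append]
    convert isWeaklyRegular_ofFn_X_succ_pow_sub_X_castSucc_pow_append hm0 k
      (Finset.univ.filter fun j : Fin (k + 1) => (j : ℕ) + 1 < k + 1) (2 * m) using 3
    · funext j
      exact dif_pos (by simp)
    · exact dif_neg (by simp)

open MvPolynomial in
/-- For integers `m ≥ 1` and `n ≥ 2`, the sequence
`(t₂^m − t₁^m, t₃^m − t₂^m, …, t_{n−1}^m − t_{n−2}^m, −t₁^m ⋯ t_{n−2}^m t_{n−1}^{2m})`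
of `n − 1` elements is a regular sequence in `ℚ[t₁, …, t_{n−1}]`.
(Variables `t₁, …, t_{n−1}` are `X 0, …, X (n−2)` in `MvPolynomial (Fin (n-1)) ℚ`.) -/
theorem stmt0 (m n : ℕ) (hm : 1 ≤ m) (hn : 2 ≤ n) :
    RingTheory.Sequence.IsWeaklyRegular (MvPolynomial (Fin (n - 1)) ℚ)
      (List.ofFn fun i : Fin (n - 1) =>
        if h : (i : ℕ) + 1 < n - 1 then
          X (⟨(i : ℕ) + 1, h⟩ : Fin (n - 1)) ^ m - X i ^ m
        else
          -((∏ j ∈ Finset.univ.filter (fun j : Fin (n - 1) => (j : ℕ) + 1 < n - 1),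
                (X j : MvPolynomial (Fin (n - 1)) ℚ) ^ m)
              * X i ^ (2 * m))) :=
  stmt0_general m n hm
end

section
/- Let m ≥ 1 and n ≥ 2 be integers. In the polynomial ring ℚ[t_1,…,t_{n−1}], the sequence of n−1 elements (t_2^m − t_1^m, t_3^m − t_1^m, …, t_{n−1}^m − t_1^m, −t_1^m t_2^m ⋯ t_{n−2}^m t_{n−1}^{2m}) is a regular sequence. -/
/-!
Write `I_S = (x_j^m - x_0^m : j ∈ S)` with `x_0 ∉ S`. Modulo `I_S` every monomial reduces to
one in which each `x_j`, `j ∈ S`, has exponent `< m`, the removed `m`-th powers being traded for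
powers of `x_0`. Extending this reduction linearly gives an `R`-linear normal form `N` with
`f - N f ∈ I_S` and `N (I_S) = 0`, and `N` commutes with multiplication by any polynomial `g`
free of the variables in `S`. Hence for such `g ≠ 0` over a domain, `g f ∈ I_S` forces
`g N f = 0`, so `N f = 0` and `f ∈ I_S`: `g` is a nonzerodivisor modulo `I_S`.

The `i`-th term of the sequence is `x_{i+1}^m - x_0^m`, which avoids the variables
`x_1, …, x_i` of the previous terms; the last one is a monomial whose exponents are multiples of
`m`, hence congruent modulo the previous terms to a power of `x_0`.
-/

namespace MvPolynomial

section Ideal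

variable {σ : Type*} (R : Type*) [CommRing R] (m : ℕ) (x0 : σ) (S : Finset σ)

noncomputable def powDiffIdeal : Ideal (MvPolynomial σ R) :=
  Ideal.span ((fun j => X j ^ m - X x0 ^ m) '' S)

variable {R m x0 S}

lemma mk_X_pow_eq_mk_X_pow_of_mem {j : σ} (hj : j ∈ S) :
    Ideal.Quotient.mk (powDiffIdeal R m x0 S) (X j ^ m) = Ideal.Quotient.mk _ (X x0 ^ m) :=
  Ideal.Quotient.eq.mpr (Ideal.subset_span ⟨j, hj, rfl⟩)

end Ideal

section NormalForm

variable {σ : Type*} [DecidableEq σ] (R : Type*) [CommRing R] (m : ℕ) (x0 : σ) (S : Finset σ)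

noncomputable def powDiffRemainder (d : σ →₀ ℕ) : σ →₀ ℕ :=
  Finsupp.onFinset d.support (fun j => if j ∈ S then d j % m else d j) fun j hj => by
    rw [Finsupp.mem_support_iff]
    intro hdj
    simp [hdj] at hj

/-- The exponent of the normal form of `X^d` modulo `powDiffIdeal R m x0 S`. -/
noncomputable def powDiffExponent (d : σ →₀ ℕ) : σ →₀ ℕ :=
  powDiffRemainder m S d + Finsupp.single x0 (m * ∑ j ∈ S, d j / m)

variable {R m x0 S}

@[simp] lemma powDiffRemainder_apply (d : σ →₀ ℕ) (j : σ) :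
    powDiffRemainder m S d j = if j ∈ S then d j % m else d j := rfl

lemma powDiffRemainder_add_sum_single (d : σ →₀ ℕ) :
    powDiffRemainder m S d + ∑ j ∈ S, Finsupp.single j (m * (d j / m)) = d := by
  ext j
  simp only [Finsupp.add_apply, powDiffRemainder_apply, Finsupp.finsetSum_apply,
    Finsupp.single_apply, Finset.sum_ite_eq']
  split_ifs <;> simp [Nat.mod_add_div]

lemma powDiffExponent_add_of_forall_mem_eq_zero {e : σ →₀ ℕ} (he : ∀ j ∈ S, e j = 0)
    (d : σ →₀ ℕ) : powDiffExponent m x0 S (e + d) = e + powDiffExponent m x0 S d := by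
  have hsum : ∑ j ∈ S, (e + d) j / m = ∑ j ∈ S, d j / m :=
    Finset.sum_congr rfl fun j hj => by simp [he j hj]
  rw [powDiffExponent, powDiffExponent, hsum, ← add_assoc]
  congr 1
  ext j
  by_cases hj : j ∈ S <;> simp [hj, he]

lemma powDiffExponent_single_add_of_mem {j : σ} (hj : j ∈ S) (d : σ →₀ ℕ) :
    powDiffExponent m x0 S (Finsupp.single j m + d) =
      Finsupp.single x0 m + powDiffExponent m x0 S d := by
  rcases Nat.eq_zero_or_pos m with rfl | hm
  · simp
  have hsum : ∑ i ∈ S, (Finsupp.single j m + d) i / m = ∑ i ∈ S, d i / m + 1 := by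
    rw [← Finset.sum_ite_eq_of_mem S j (fun _ => 1) hj, ← Finset.sum_add_distrib]
    refine Finset.sum_congr rfl fun i _ => ?_
    by_cases hij : j = i <;> simp [hij, Nat.add_div_left _ hm, add_comm]
  have hrem : powDiffRemainder m S (Finsupp.single j m + d) = powDiffRemainder m S d := by
    ext i
    by_cases hij : j = i
    · subst hij; simp [hj]
    · simp [hij]
  rw [powDiffExponent, powDiffExponent, hsum, hrem, mul_add_one, Finsupp.single_add]
  abel

variable (R m x0 S)

noncomputable def powDiffNormalForm : MvPolynomial σ R →ₗ[R] MvPolynomial σ R :=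
  AddMonoidAlgebra.mapDomainLinearMap R R (powDiffExponent m x0 S)

variable {R m x0 S}

lemma powDiffNormalForm_monomial (d : σ →₀ ℕ) (c : R) :
    powDiffNormalForm R m x0 S (monomial d c) = monomial (powDiffExponent m x0 S d) c :=
  AddMonoidAlgebra.mapDomainLinearMap_single _ _ _

lemma powDiffNormalForm_monomial_mul {e : σ →₀ ℕ} (he : ∀ j ∈ S, e j = 0) (c : R)
    (f : MvPolynomial σ R) :
    powDiffNormalForm R m x0 S (monomial e c * f) =
      monomial e c * powDiffNormalForm R m x0 S f := by
  induction f using MvPolynomial.induction_on' with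
  | monomial d c' =>
    rw [monomial_mul, powDiffNormalForm_monomial, powDiffNormalForm_monomial, monomial_mul,
      powDiffExponent_add_of_forall_mem_eq_zero he]
  | add p q hp hq => rw [mul_add, map_add, map_add, hp, hq, mul_add]

lemma powDiffNormalForm_mul_of_disjoint_vars {g : MvPolynomial σ R} (hg : Disjoint g.vars S)
    (f : MvPolynomial σ R) :
    powDiffNormalForm R m x0 S (g * f) = g * powDiffNormalForm R m x0 S f := by
  conv_lhs => rw [g.as_sum, Finset.sum_mul, map_sum]
  conv_rhs => rw [g.as_sum, Finset.sum_mul]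
  refine Finset.sum_congr rfl fun d hd => powDiffNormalForm_monomial_mul (fun j hj => ?_) _ f
  by_contra hdj
  exact Finset.disjoint_left.mp hg
    ((mem_vars_iff_mem_support j).mpr ⟨d, hd, Finsupp.mem_support_iff.mpr hdj⟩) hj

lemma powDiffNormalForm_X_pow_sub_X_pow_mul (hx0 : x0 ∉ S) {j : σ} (hj : j ∈ S)
    (f : MvPolynomial σ R) :
    powDiffNormalForm R m x0 S ((X j ^ m - X x0 ^ m) * f) = 0 := by
  induction f using MvPolynomial.induction_on' with
  | monomial d c =>
    have hx0' : ∀ i ∈ S, (Finsupp.single x0 m) i = 0 := fun i hi =>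
      Finsupp.single_eq_of_ne (fun h => hx0 (h ▸ hi))
    rw [sub_mul, X_pow_eq_monomial, X_pow_eq_monomial, monomial_mul, monomial_mul, one_mul,
      map_sub, powDiffNormalForm_monomial, powDiffNormalForm_monomial,
      powDiffExponent_single_add_of_mem hj, powDiffExponent_add_of_forall_mem_eq_zero hx0',
      sub_self]
  | add p q hp hq => rw [mul_add, map_add, hp, hq, add_zero]

lemma powDiffNormalForm_eq_zero_of_mem (hx0 : x0 ∉ S) {f : MvPolynomial σ R}
    (hf : f ∈ powDiffIdeal R m x0 S) : powDiffNormalForm R m x0 S f = 0 := by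
  obtain ⟨c, rfl⟩ := (Submodule.mem_span_image_finset_iff_exists_fun' _).mp hf
  simp only [map_sum, smul_eq_mul, mul_comm (c _)]
  exact Finset.sum_eq_zero fun j hj => powDiffNormalForm_X_pow_sub_X_pow_mul hx0 hj _

lemma monomial_sub_monomial_powDiffExponent_mem (d : σ →₀ ℕ) (c : R) :
    monomial d c - monomial (powDiffExponent m x0 S d) c ∈ powDiffIdeal R m x0 S := by
  rw [← Ideal.Quotient.eq]
  conv_lhs => rw [← powDiffRemainder_add_sum_single (m := m) (S := S) d]
  rw [powDiffExponent, ← mul_one c, ← monomial_mul, ← monomial_mul, monomial_sum_index,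
    map_mul, map_mul, map_mul, map_prod, ← X_pow_eq_monomial, pow_mul]
  congr 1
  rw [C_1, map_one, one_mul, map_pow, ← Finset.prod_pow_eq_pow_sum]
  refine Finset.prod_congr rfl fun j hj => ?_
  rw [← X_pow_eq_monomial, pow_mul, map_pow, mk_X_pow_eq_mk_X_pow_of_mem hj]

lemma sub_powDiffNormalForm_mem (f : MvPolynomial σ R) :
    f - powDiffNormalForm R m x0 S f ∈ powDiffIdeal R m x0 S := by
  induction f using MvPolynomial.induction_on' with
  | monomial d c =>
    rw [powDiffNormalForm_monomial]
    exact monomial_sub_monomial_powDiffExponent_mem d c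
  | add p q hp hq =>
    rw [map_add, add_sub_add_comm]
    exact add_mem hp hq

lemma mem_powDiffIdeal_of_mul_mem [IsDomain R] (hx0 : x0 ∉ S) {g f : MvPolynomial σ R}
    (hg : g ≠ 0) (hgS : Disjoint g.vars S) (hgf : g * f ∈ powDiffIdeal R m x0 S) :
    f ∈ powDiffIdeal R m x0 S := by
  have hNF : g * powDiffNormalForm R m x0 S f = 0 := by
    rw [← powDiffNormalForm_mul_of_disjoint_vars hgS, powDiffNormalForm_eq_zero_of_mem hx0 hgf]
  simpa [(mul_eq_zero.mp hNF).resolve_left hg] using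
    sub_powDiffNormalForm_mem (m := m) (x0 := x0) (S := S) f

lemma isSMulRegular_quotient_powDiffIdeal_of_sub_mem [IsDomain R] (hx0 : x0 ∉ S)
    {a g : MvPolynomial σ R} (hag : a - g ∈ powDiffIdeal R m x0 S) (hg : g ≠ 0)
    (hgS : Disjoint g.vars S) :
    IsSMulRegular (MvPolynomial σ R ⧸ (powDiffIdeal R m x0 S • ⊤ : Ideal (MvPolynomial σ R)))
      a := by
  rw [isSMulRegular_quotient_iff_mem_of_smul_mem, Ideal.smul_eq_mul, Ideal.mul_top]
  intro f haf
  refine mem_powDiffIdeal_of_mul_mem hx0 hg hgS ?_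
  rw [smul_eq_mul] at haf
  simpa [sub_mul] using sub_mem haf (Ideal.mul_mem_right f _ hag)

lemma isSMulRegular_quotient_powDiffIdeal_X_pow_sub_X_pow [IsDomain R] (hm : m ≠ 0)
    (hx0 : x0 ∉ S) {j : σ} (hj : j ∉ S) (hjx0 : j ≠ x0) :
    IsSMulRegular (MvPolynomial σ R ⧸ (powDiffIdeal R m x0 S • ⊤ : Ideal (MvPolynomial σ R)))
      (X j ^ m - X x0 ^ m : MvPolynomial σ R) := by
  refine isSMulRegular_quotient_powDiffIdeal_of_sub_mem hx0 (by rw [sub_self]; exact zero_mem _)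
    ?_ ?_
  · rw [sub_ne_zero, X_pow_eq_monomial, X_pow_eq_monomial, Ne, monomial_left_inj one_ne_zero]
    exact fun h => hjx0 (Finsupp.single_left_injective hm h)
  · refine Finset.disjoint_of_subset_left ((vars_sub_subset _).trans
      (Finset.union_subset_union (vars_pow _ _) (vars_pow _ _))) ?_
    simp [vars_X, hj, hx0]

lemma isSMulRegular_quotient_powDiffIdeal_neg_prod_X_pow [IsDomain R] (hx0 : x0 ∉ S)
    (hS : ∀ j, j ≠ x0 → j ∈ S) (T : Finset σ) (k : σ) :
    IsSMulRegular (MvPolynomial σ R ⧸ (powDiffIdeal R m x0 S • ⊤ : Ideal (MvPolynomial σ R)))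
      (-((∏ j ∈ T, X j ^ m) * X k ^ (2 * m)) : MvPolynomial σ R) := by
  have hmk (j : σ) : Ideal.Quotient.mk (powDiffIdeal R m x0 S) (X j) ^ m =
      Ideal.Quotient.mk _ (X x0) ^ m := by
    by_cases hj : j = x0
    · rw [hj]
    · simpa only [map_pow] using mk_X_pow_eq_mk_X_pow_of_mem (R := R) (hS j hj)
  refine isSMulRegular_quotient_powDiffIdeal_of_sub_mem (g := -(X x0 ^ m) ^ (T.card + 2)) hx0
    ?_ ?_ ?_
  · rw [← Ideal.Quotient.eq, mul_comm 2 m, pow_mul, pow_add]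
    simp only [map_neg, map_mul, map_prod, map_pow, hmk, Finset.prod_const]
  · exact neg_ne_zero.mpr (pow_ne_zero _ (pow_ne_zero _ (X_ne_zero _)))
  · rw [vars_neg]
    refine Finset.disjoint_of_subset_left ((vars_pow _ _).trans (vars_pow _ _)) ?_
    simp [vars_X, hx0]

end NormalForm

end MvPolynomial

open MvPolynomial

lemma ofList_take_ofFn_eq_powDiffIdeal {R : Type*} [CommRing R] {m N i : ℕ} (hi : i < N)
    (F : Fin N → MvPolynomial (Fin N) R)
    (hF : ∀ (k : Fin N) (h : (k : ℕ) + 1 < N),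
      F k = X ⟨k + 1, h⟩ ^ m - X ⟨0, by omega⟩ ^ m) :
    Ideal.ofList ((List.ofFn F).take i) =
      powDiffIdeal R m ⟨0, by omega⟩ (Finset.Ioc ⟨0, by omega⟩ ⟨i, hi⟩) := by
  refine congrArg Ideal.span (Set.ext fun r => ?_)
  simp only [Set.mem_ofPred_eq, List.mem_take_iff_getElem, List.getElem_ofFn, List.length_ofFn,
    Set.mem_image, Finset.coe_Ioc, Set.mem_Ioc, Fin.lt_def, Fin.le_def]
  constructor
  · rintro ⟨k, hk, rfl⟩
    exact ⟨⟨k + 1, by omega⟩, ⟨k.succ_pos, by simp only; omega⟩,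
      (hF ⟨k, by omega⟩ (by simp only; omega)).symm⟩
  · rintro ⟨j, ⟨hj0, hji⟩, rfl⟩
    refine ⟨j - 1, by omega, ?_⟩
    rw [hF ⟨j - 1, by omega⟩ (by simp only; omega)]
    congr
    exact Nat.sub_add_cancel hj0

/-- For integers `m ≥ 1` and `n ≥ 2`, the sequence
`(t₂^m − t₁^m, t₃^m − t₁^m, …, t_{n−1}^m − t₁^m, −t₁^m ⋯ t_{n−2}^m t_{n−1}^{2m})`
of `n − 1` elements is a regular sequence in `ℚ[t₁, …, t_{n−1}]`.
(Variables `t₁, …, t_{n−1}` are `X 0, …, X (n−2)` in `MvPolynomial (Fin (n-1)) ℚ`.) -/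
theorem stmt1 (m n : ℕ) (hm : 1 ≤ m) :
    RingTheory.Sequence.IsWeaklyRegular (MvPolynomial (Fin (n - 1)) ℚ)
      (List.ofFn fun i : Fin (n - 1) =>
        if h : (i : ℕ) + 1 < n - 1 then
          X (⟨(i : ℕ) + 1, h⟩ : Fin (n - 1)) ^ m - X (⟨0, by omega⟩ : Fin (n - 1)) ^ m
        else
          -((∏ j ∈ Finset.univ.filter (fun j : Fin (n - 1) => (j : ℕ) + 1 < n - 1),
                (X j : MvPolynomial (Fin (n - 1)) ℚ) ^ m)
              * X i ^ (2 * m))) := by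
  refine ⟨fun i hi => ?_⟩
  rw [List.length_ofFn] at hi
  rw [ofList_take_ofFn_eq_powDiffIdeal hi _ fun k h => dif_pos h, List.getElem_ofFn]
  have hx0 := Finset.left_notMem_Ioc (a := (⟨0, by omega⟩ : Fin (n - 1))) (b := ⟨i, hi⟩)
  split_ifs with h
  · refine isSMulRegular_quotient_powDiffIdeal_X_pow_sub_X_pow (by omega) hx0 ?_ ?_ <;>
      simp [Fin.ext_iff]
  · refine isSMulRegular_quotient_powDiffIdeal_neg_prod_X_pow hx0 (fun j hj => ?_) _ _
    simp only [Finset.mem_Ioc, Fin.lt_def, Fin.le_def, ne_eq, Fin.ext_iff] at h hj ⊢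
    omega
end

section
/- Let m ≥ 1 and n ≥ 4 be integers, and let k satisfy 3 ≤ k ≤ n−1. The quotient ring ℚ[t_1,…,t_{n−1}]/(t_2^m − t_1^m, t_3^m − t_1^m, …, t_{k−1}^m − t_1^m), regarded as a module over the subring ℚ[t_1, t_k, t_{k+1}, …, t_{n−1}] (via the composition of the inclusion into ℚ[t_1,…,t_{n−1}] with the quotient map), is free with basis given by the images of the monomials t_2^{s_2} ⋯ t_{k−1}^{s_{k−1}} with 0 ≤ s_j ≤ m−1 for all j ∈ {2,…,k−1}. -/
/-!
Let `𝒜 ⊆ R[X_σ]` be the polynomials in the variables outside the image of `ι : τ ↪ σ`, so that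
`R[X_σ] = 𝒜[X_τ]`, and let `a ∈ 𝒜` (in the theorem, `a = t₁^m`). Modulo the relations
`X_{ι j}^m = a`, a monomial `X^e` in the variables `X_τ` reduces to `a^(∑ ⌊e_j / m⌋) X^(e mod m)`.
This reduction is `𝒜`-linear and kills the relations, so it is a left inverse of
`(c_s)_s ↦ ∑ c_s X^s` (`s : τ → Fin m`); that map is onto since every monomial reduces.
-/

theorem pow_eq_pow_div_mul_pow_mod {M : Type*} [Monoid M] {x b : M} {m : ℕ} (h : x ^ m = b)
    (t : ℕ) : x ^ t = b ^ (t / m) * x ^ (t % m) := by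
  rw [← h, ← pow_mul, ← pow_add, Nat.div_add_mod]

namespace MvPolynomial

section NormalForm

variable {A τ : Type*} [CommRing A] (m : ℕ) [NeZero m] (a : A)

def expMod (e : τ →₀ ℕ) : τ → Fin m := fun j => Fin.ofNat m (e j)

variable {m} in
theorem expMod_add_single (e : τ →₀ ℕ) (i : τ) :
    expMod m (e + Finsupp.single i m) = expMod m e := by
  classical
  funext j
  simp only [expMod, Fin.ext_iff, Fin.val_ofNat, Finsupp.add_apply, Finsupp.single_apply]
  split_ifs <;> simp

variable [Fintype τ]

def expDiv (e : τ →₀ ℕ) : ℕ := ∑ j, e j / m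

theorem expDiv_add_single (e : τ →₀ ℕ) (i : τ) :
    expDiv m (e + Finsupp.single i m) = expDiv m e + 1 := by
  classical
  have hm : 0 < m := Nat.pos_of_neZero m
  have (j : τ) : (e + Finsupp.single i m) j / m = e j / m + if i = j then 1 else 0 := by
    rw [Finsupp.add_apply, Finsupp.single_apply]
    split_ifs <;> simp [Nat.add_div_right _ hm]
  simp only [expDiv, this, Finset.sum_add_distrib, Finset.sum_ite_eq, Finset.mem_univ, if_true]

-- The reduction modulo `X_j ^ m = a`, in coordinates with respect to the `X^s`, `s : τ → Fin m`.
noncomputable def normalForm : MvPolynomial τ A →ₗ[A] ((τ → Fin m) →₀ A) :=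
  (basisMonomials τ A).constr A fun e => Finsupp.single (expMod m e) (a ^ expDiv m e)

theorem normalForm_monomial (e : τ →₀ ℕ) (c : A) :
    normalForm m a (monomial e c) = Finsupp.single (expMod m e) (c * a ^ expDiv m e) := by
  have : monomial e c = c • basisMonomials τ A e := by simp [smul_monomial]
  rw [this, map_smul, normalForm, Module.Basis.constr_basis, Finsupp.smul_single, smul_eq_mul]

theorem normalForm_mul_X_pow_sub_C (p : MvPolynomial τ A) (i : τ) :
    normalForm m a (p * (X i ^ m - C a)) = 0 := by
  induction p using MvPolynomial.induction_on' with
  | monomial e c =>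
    have hX : monomial e c * X i ^ m = monomial (e + Finsupp.single i m) c := by
      rw [X_pow_eq_monomial, monomial_mul, mul_one]
    rw [mul_sub, hX, mul_comm (monomial e c), C_mul_monomial, map_sub, normalForm_monomial,
      normalForm_monomial, expMod_add_single, expDiv_add_single, pow_succ', mul_left_comm,
      mul_assoc, sub_self]
  | add p q hp hq => rw [add_mul, map_add, hp, hq, add_zero]

theorem normalForm_eq_zero_of_mem_span {p : MvPolynomial τ A}
    (hp : p ∈ Ideal.span (Set.range fun i => X i ^ m - C a)) : normalForm m a p = 0 := by
  obtain ⟨c, rfl⟩ := Ideal.mem_span_range_iff_exists_fun.1 hp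
  simp only [map_sum, normalForm_mul_X_pow_sub_C, Finset.sum_const_zero]

theorem normalForm_C_mul_prod_X_pow (c : A) (s : τ → Fin m) :
    normalForm m a (C c * ∏ j, X j ^ (s j : ℕ)) = Finsupp.single s c := by
  set e := Finsupp.equivFunOnFinite.symm fun j => (s j : ℕ)
  have hprod : ∏ j, X j ^ (s j : ℕ) = (monomial e 1 : MvPolynomial τ A) := by
    rw [monomial_eq, C_1, one_mul, Finsupp.prod_fintype _ _ (fun _ => pow_zero _)]
    rfl
  have hmod : expMod m e = s := by ext j; simp [expMod, e]
  have hdiv : expDiv m e = 0 := Finset.sum_eq_zero fun j _ => by simp [e]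
  rw [hprod, C_mul_monomial, normalForm_monomial, hmod, hdiv, pow_zero, mul_one, mul_one]

end NormalForm

section SplitVariables

variable {R σ τ : Type*} [CommRing R] (ι : τ → σ)

local notation "𝒜" => supported R (Set.range ι)ᶜ

-- Reads a polynomial over `R` as one in the variables `X (ι j)` with coefficients in `𝒜`.
open Classical in
noncomputable def splitVars : MvPolynomial σ R →ₐ[R] MvPolynomial τ 𝒜 :=
  aeval fun i =>
    if h : ∃ j, ι j = i then X h.choose else C ⟨X i, Algebra.subset_adjoin ⟨i, h, rfl⟩⟩

noncomputable def joinVars : MvPolynomial τ 𝒜 →ₐ[𝒜] MvPolynomial σ R :=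
  aeval fun j => X (ι j)

variable {ι}

theorem splitVars_X_apply (hι : Function.Injective ι) (j : τ) :
    splitVars ι (X (ι j)) = (X j : MvPolynomial τ 𝒜) := by
  have h : ∃ j', ι j' = ι j := ⟨j, rfl⟩
  rw [splitVars, aeval_X, dif_pos h, hι h.choose_spec]

theorem splitVars_coe (a : 𝒜) : splitVars ι (a : MvPolynomial σ R) = C a := by
  obtain ⟨p, rfl⟩ := (supportedEquivMvPolynomial (Set.range ι)ᶜ).symm.surjective a
  induction p using MvPolynomial.induction_on with
  | C r =>
    rw [supportedEquivMvPolynomial_symm_C]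
    simp [splitVars, MvPolynomial.algebraMap_eq]
  | add p q hp hq => simp only [map_add, Subalgebra.coe_add, hp, hq]
  | mul_X p i hp =>
    have hi : ¬∃ j, ι j = i := i.2
    rw [map_mul, Subalgebra.coe_mul, map_mul, hp, map_mul, supportedEquivMvPolynomial_symm_X,
      splitVars, aeval_X, dif_neg hi]
    exact congrArg _ (congrArg C (Subtype.ext (supportedEquivMvPolynomial_symm_X _ i).symm))

theorem joinVars_splitVars (p : MvPolynomial σ R) : joinVars ι (splitVars ι p) = p := by
  induction p using MvPolynomial.induction_on with
  | C r => simp [joinVars, splitVars, MvPolynomial.algebraMap_eq]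
  | add p q hp hq => simp only [map_add, hp, hq]
  | mul_X p i hp =>
    rw [map_mul, map_mul, hp, splitVars, aeval_X]
    split_ifs with h
    · rw [joinVars, aeval_X, h.choose_spec]
    · rw [joinVars, aeval_C]
      rfl

end SplitVariables

section Quotient

variable {R σ τ : Type*} [CommRing R] [Fintype τ] (m : ℕ) [NeZero m] {ι : τ → σ}

local notation "𝒜" => supported R (Set.range ι)ᶜ

theorem normalForm_splitVars_eq_zero_of_mem (hι : Function.Injective ι) (a : 𝒜)
    {p : MvPolynomial σ R}
    (hp : p ∈ Ideal.span (Set.range fun j => X (ι j) ^ m - (a : MvPolynomial σ R))) :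
    normalForm m a (splitVars ι p) = 0 := by
  apply normalForm_eq_zero_of_mem_span
  have hgen : (splitVars ι ∘ fun j => X (ι j) ^ m - (a : MvPolynomial σ R)) =
      fun j => X j ^ m - C a := by
    funext j
    simp only [Function.comp_apply, map_sub, map_pow, splitVars_X_apply hι, splitVars_coe]
  simpa only [Ideal.map_span, ← Set.range_comp, hgen] using Ideal.mem_map_of_mem (splitVars ι) hp

theorem normalForm_splitVars_mul_prod (hι : Function.Injective ι) (a c : 𝒜) (s : τ → Fin m) :
    normalForm m a (splitVars ι ((c : MvPolynomial σ R) * ∏ j, X (ι j) ^ (s j : ℕ))) =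
      Finsupp.single s c := by
  rw [map_mul, map_prod, splitVars_coe]
  simp only [map_pow, splitVars_X_apply hι]
  exact normalForm_C_mul_prod_X_pow m a c s

theorem mk_joinVars (a : 𝒜) {I : Ideal (MvPolynomial σ R)}
    (hI : ∀ j, X (ι j) ^ m - (a : MvPolynomial σ R) ∈ I) (q : MvPolynomial τ 𝒜) :
    Ideal.Quotient.mk I (joinVars ι q) = (normalForm m a q).sum fun s c =>
      Ideal.Quotient.mk I ((c : MvPolynomial σ R) * ∏ j, X (ι j) ^ (s j : ℕ)) := by
  have hX (j : τ) (t : ℕ) : Ideal.Quotient.mk I (X (ι j)) ^ t =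
      Ideal.Quotient.mk I a ^ (t / m) * Ideal.Quotient.mk I (X (ι j)) ^ (t % m) := by
    refine pow_eq_pow_div_mul_pow_mod ?_ t
    rw [← map_pow, Ideal.Quotient.mk_eq_mk_iff_sub_mem]
    exact hI j
  induction q using MvPolynomial.induction_on' with
  | monomial e c =>
    rw [normalForm_monomial, Finsupp.sum_single_index (by simp), joinVars, aeval_monomial,
      Finsupp.prod_fintype _ _ (fun _ => pow_zero _)]
    simp only [map_mul, map_prod, map_pow, Subalgebra.coe_mul, SubmonoidClass.coe_pow, expMod,
      Fin.val_ofNat]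
    rw [Finset.prod_congr rfl fun j _ => hX j (e j), Finset.prod_mul_distrib,
      Finset.prod_pow_eq_pow_sum, expDiv, mul_assoc]
    rfl
  | add p q hp hq =>
    rw [map_add, map_add, map_add, hp, hq, Finsupp.sum_add_index' (by simp) (fun _ _ _ => by
      rw [Subalgebra.coe_add, add_mul, map_add])]

theorem exists_basis_quotient_X_pow_sub (hι : Function.Injective ι) (a : 𝒜)
    (I : Ideal (MvPolynomial σ R))
    (hI : I = Ideal.span (Set.range fun j => X (ι j) ^ m - (a : MvPolynomial σ R))) :
    ∃ b : @Module.Basis (τ → Fin m) 𝒜 (MvPolynomial σ R ⧸ I) _ _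
        (RingHom.toModule ((Ideal.Quotient.mk I).comp (𝒜).val.toRingHom)),
      ∀ s : τ → Fin m, b s = Ideal.Quotient.mk I (∏ j, X (ι j) ^ (s j : ℕ)) := by
  have hgen (j : τ) : X (ι j) ^ m - (a : MvPolynomial σ R) ∈ I := by
    rw [hI]
    exact Ideal.subset_span ⟨j, rfl⟩
  let _ : Module 𝒜 (MvPolynomial σ R ⧸ I) :=
    RingHom.toModule ((Ideal.Quotient.mk I).comp (𝒜).val.toRingHom)
  set v : (τ → Fin m) → MvPolynomial σ R ⧸ I :=
    fun s => Ideal.Quotient.mk I (∏ j, X (ι j) ^ (s j : ℕ))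
  have hcomb (l : (τ → Fin m) →₀ 𝒜) : Finsupp.linearCombination 𝒜 v l =
      Ideal.Quotient.mk I (l.sum fun s c => (c : MvPolynomial σ R) * ∏ j, X (ι j) ^ (s j : ℕ)) := by
    rw [Finsupp.linearCombination_apply, map_finsuppSum]
    rfl
  have hli : LinearIndependent 𝒜 v := linearIndependent_iff.2 fun l hl => by
    rw [hcomb, Ideal.Quotient.eq_zero_iff_mem, hI] at hl
    have := normalForm_splitVars_eq_zero_of_mem m hι a hl
    simpa only [map_finsuppSum, normalForm_splitVars_mul_prod m hι, Finsupp.sum_single] using this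
  have hsp : ⊤ ≤ Submodule.span 𝒜 (Set.range v) := by
    rintro q -
    obtain ⟨p, rfl⟩ := Ideal.Quotient.mk_surjective q
    rw [← joinVars_splitVars p, mk_joinVars m a hgen]
    refine AddSubmonoidClass.finsuppSum_mem _ _ _ fun s _ => ?_
    rw [map_mul]
    exact Submodule.smul_mem _ _ (Submodule.subset_span ⟨s, rfl⟩)
  exact ⟨Module.Basis.mk hli hsp, Module.Basis.mk_apply hli hsp⟩

end Quotient

end MvPolynomial

open MvPolynomial in
/-- For `m ≥ 1`, `n ≥ 4`, `3 ≤ k ≤ n−1`, the quotient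
`ℚ[t₁,…,t_{n−1}]/(t₂^m − t₁^m, …, t_{k−1}^m − t₁^m)` is a free module over the subring
`ℚ[t₁, t_k, …, t_{n−1}]` (acting via the inclusion followed by the quotient map),
with basis the images of the monomials `t₂^{s₂} ⋯ t_{k−1}^{s_{k−1}}`, `0 ≤ s_j ≤ m − 1`. -/
theorem stmt3 (m n k : ℕ) (hm : 1 ≤ m) (hk1 : 3 ≤ k) (hk2 : k ≤ n - 1)
    (I : Ideal (MvPolynomial (Fin (n - 1)) ℚ))
    (hI : I = Ideal.span (Set.range fun i : Fin (k - 2) =>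
      X (⟨(i : ℕ) + 1, by have := i.2; omega⟩ : Fin (n - 1)) ^ m
        - X (⟨0, by omega⟩ : Fin (n - 1)) ^ m))
    (A : Subalgebra ℚ (MvPolynomial (Fin (n - 1)) ℚ))
    (hA : A = Algebra.adjoin ℚ
      ((fun i => (X i : MvPolynomial (Fin (n - 1)) ℚ)) ''
        {i : Fin (n - 1) | (i : ℕ) = 0 ∨ k - 1 ≤ (i : ℕ)})) :
    ∃ b : @Module.Basis (Fin (k - 2) → Fin m) A (MvPolynomial (Fin (n - 1)) ℚ ⧸ I) _ _
        (RingHom.toModule ((Ideal.Quotient.mk I).comp A.val.toRingHom)),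
      ∀ s : Fin (k - 2) → Fin m,
        b s = Ideal.Quotient.mk I
          (∏ j : Fin (k - 2),
            X (⟨(j : ℕ) + 1, by have := j.2; omega⟩ : Fin (n - 1)) ^ (s j : ℕ)) := by
  have : NeZero m := ⟨by omega⟩
  let ι : Fin (k - 2) → Fin (n - 1) := fun j => ⟨j + 1, by omega⟩
  have hι : Function.Injective ι := fun i j h => Fin.ext (by simpa [ι] using congrArg Fin.val h)
  have hrange : {i : Fin (n - 1) | (i : ℕ) = 0 ∨ k - 1 ≤ (i : ℕ)} = (Set.range ι)ᶜ := by
    ext i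
    simp only [Set.mem_ofPred_eq, Set.mem_compl_iff, Set.mem_range, not_exists, ι, Fin.ext_iff]
    constructor
    · omega
    · intro h
      by_contra! h'
      exact h ⟨i - 1, by omega⟩ (by dsimp only; omega)
  have h0 : (X ⟨0, by omega⟩ : MvPolynomial (Fin (n - 1)) ℚ) ^ m ∈ supported ℚ (Set.range ι)ᶜ :=
    pow_mem (X_mem_supported.2 (hrange ▸ Or.inl rfl)) m
  rw [hrange] at hA
  subst hA
  exact exists_basis_quotient_X_pow_sub m hι ⟨_, h0⟩ I hI
end

section
/- Let n ≥ 2, let p ∈ ℚ[t] be a polynomial and set q(t) = t·p(t). Then in ℚ[t_1,…,t_n] the identity a_{(p,1,0,…,0)} = a_{(p,0,0,…,0)} · e_1 − a_{(q,0,0,…,0)} holds, where e_1 = t_1 + t_2 + ⋯ + t_n. -/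
/-!
Multiplying `det M` by `e₁ = ∑ tⱼ` and expanding over permutations, each monomial
`∏ M (σ k) k` picks up the factor `t_{σ⁻¹ r}` for exactly one row `r`, so
`det M · e₁ = ∑ᵣ det (M with row r multiplied entrywise by (t₁, …, tₙ))`.
For the alternant with exponents `n − 1 − i`, multiplying row `0` turns `p` into `t·p`,
multiplying row `1` raises its exponent to `n − 1`, and multiplying any row `r ≥ 2`
makes it equal to row `r − 1`, so those determinants vanish.
-/

open MvPolynomial

/-- The extended alternant `a_{(p, λ₂, …, λ_n)}`: the determinant of the `n × n` matrix whose
first row is `(p(t₁), …, p(t_n))` and whose row `i` (for `1 ≤ i ≤ n−1`, 0-based) is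
`(t₁^{e i}, …, t_n^{e i})`, where `e` records the exponents `λ_{i+1} + n − (i+1)`. -/
noncomputable def altDet (n : ℕ) (p : Polynomial ℚ) (e : ℕ → ℕ) :
    MvPolynomial (Fin n) ℚ :=
  (Matrix.of fun i j : Fin n =>
    if (i : ℕ) = 0 then Polynomial.aeval (X j) p else X j ^ e (i : ℕ)).det

namespace Matrix

variable {R ι : Type*} [CommRing R] [Fintype ι] [DecidableEq ι]

theorem det_mul_sum (M : Matrix ι ι R) (x : ι → R) :
    M.det * ∑ j, x j = ∑ i, (M.updateRow i (x * M i)).det := by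
  have hprod : ∀ (i : ι) (σ : Equiv.Perm ι),
      ∏ k, M.updateRow i (x * M i) (σ k) k = x (σ.symm i) * ∏ k, M (σ k) k := by
    intro i σ
    have hentry : ∀ k, M.updateRow i (x * M i) (σ k) k
        = (if k = σ.symm i then x k else 1) * M (σ k) k := by
      intro k
      rcases eq_or_ne k (σ.symm i) with rfl | hk
      · simp
      · have : σ k ≠ i := fun h => hk (σ.eq_symm_apply.mpr h)
        simp [updateRow_ne this, hk]
    rw [Finset.prod_congr rfl fun k _ => hentry k, Finset.prod_mul_distrib,
      Finset.prod_ite_eq']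
    simp
  simp only [det_apply, hprod, Finset.sum_mul, smul_mul_assoc]
  rw [Finset.sum_comm]
  refine Finset.sum_congr rfl fun σ _ => ?_
  rw [← Finset.smul_sum, ← Finset.sum_mul, Equiv.sum_comp σ.symm x, mul_comm]

end Matrix

section Alternant

variable {n : ℕ}

noncomputable def altMatrix (n : ℕ) (p : Polynomial ℚ) (e : ℕ → ℕ) :
    Matrix (Fin n) (Fin n) (MvPolynomial (Fin n) ℚ) :=
  Matrix.of fun i j => if (i : ℕ) = 0 then Polynomial.aeval (X j) p else X j ^ e i

theorem altDet_eq_det_altMatrix (p : Polynomial ℚ) (e : ℕ → ℕ) :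
    altDet n p e = (altMatrix n p e).det := rfl

theorem altMatrix_updateRow_zero [NeZero n] (p : Polynomial ℚ) (e : ℕ → ℕ) :
    (altMatrix n p e).updateRow 0 (X * altMatrix n p e 0) = altMatrix n (p * Polynomial.X) e := by
  ext i j
  rcases eq_or_ne i 0 with rfl | hi
  · simp [altMatrix, mul_comm]
  · simp [altMatrix, hi]

theorem altMatrix_updateRow_of_ne_zero (p : Polynomial ℚ) (e : ℕ → ℕ) {r : Fin n}
    (hr : (r : ℕ) ≠ 0) :
    (altMatrix n p e).updateRow r (X * altMatrix n p e r)
      = altMatrix n p (Function.update e r (e r + 1)) := by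
  ext i j
  rcases eq_or_ne i r with rfl | hi
  · simp [altMatrix, hr, pow_succ']
  · have : (i : ℕ) ≠ r := Fin.val_ne_of_ne hi
    simp [altMatrix, Matrix.updateRow_ne hi, Function.update_of_ne this]

theorem altDet_eq_zero_of_exponent_eq (p : Polynomial ℚ) (e : ℕ → ℕ) {i j : Fin n}
    (hi : (i : ℕ) ≠ 0) (hj : (j : ℕ) ≠ 0) (hij : i ≠ j) (he : e i = e j) :
    altDet n p e = 0 :=
  Matrix.det_zero_of_row_eq hij <| funext fun k => by simp [hi, hj, he]

theorem altDet_mul_sum_X [NeZero n] (p : Polynomial ℚ) (e : ℕ → ℕ) :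
    altDet n p e * ∑ j, X j
      = altDet n (p * Polynomial.X) e
        + ∑ r ∈ Finset.univ.erase (0 : Fin n),
            altDet n p (Function.update e (r : ℕ) (e r + 1)) := by
  rw [altDet_eq_det_altMatrix, Matrix.det_mul_sum,
    ← Finset.add_sum_erase _ _ (Finset.mem_univ 0), altMatrix_updateRow_zero]
  congr 1
  refine Finset.sum_congr rfl fun r hr => ?_
  rw [altMatrix_updateRow_of_ne_zero p e (Fin.val_ne_zero_iff.mpr (Finset.ne_of_mem_erase hr))]
  rfl

end Alternant

/-- For `n ≥ 2`, `p ∈ ℚ[t]` and `q(t) = t·p(t)`, the identity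
`a_{(p,1,0,…,0)} = a_{(p,0,…,0)} · e₁ − a_{(q,0,…,0)}` holds in `ℚ[t₁,…,t_n]`,
where `e₁ = t₁ + ⋯ + t_n`. -/
theorem stmt6 (n : ℕ) (hn : 2 ≤ n) (p : Polynomial ℚ) :
    altDet n p (fun i => if i = 1 then n - 1 else n - 1 - i)
      = altDet n p (fun i => n - 1 - i) * (∑ j : Fin n, X j)
        - altDet n (p * Polynomial.X) (fun i => n - 1 - i) := by
  have : NeZero n := ⟨by omega⟩
  have hval_one : ((1 : Fin n) : ℕ) = 1 := (Fin.val_one' n).trans (Nat.mod_eq_of_lt (by omega))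
  have hone : (1 : Fin n) ∈ Finset.univ.erase 0 :=
    Finset.mem_erase.mpr
      ⟨Fin.ne_of_val_ne (by rw [hval_one, Fin.val_zero]; exact one_ne_zero), Finset.mem_univ _⟩
  rw [altDet_mul_sum_X, Finset.sum_eq_single_of_mem 1 hone, add_sub_cancel_left]
  · rw [hval_one]
    congr 1
    funext i
    simp only [Function.update_apply]
    split_ifs <;> omega
  · intro r hr hr1
    have hr0 : (r : ℕ) ≠ 0 := Fin.val_ne_zero_iff.mpr (Finset.ne_of_mem_erase hr)
    have hr1' : (r : ℕ) ≠ 1 := fun h => hr1 (Fin.ext (h.trans hval_one.symm))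
    refine altDet_eq_zero_of_exponent_eq p _ (j := ⟨r - 1, by omega⟩) hr0 (by dsimp only; omega)
      (Fin.ne_of_val_ne (by dsimp only; omega)) ?_
    simp only [Function.update_apply]
    split_ifs <;> omega
end

section
/- Let n ≥ 2 and let F(t) = Σ_{i=0}^d μ_i t^i ∈ ℚ[t]. Then for every j ∈ {0,…,n−2} the identity q_j = Δ · (Σ_{i=0}^d μ_i h_{i+j−(n−1)}) holds in ℚ[t_1,…,t_n], where Δ = ∏_{1≤i<j≤n} (t_i − t_j) is the Vandermonde determinant and h_k denotes the complete homogeneous symmetric polynomial of degree k in t_1,…,t_n (with the conventions h_0 = 1 and h_k = 0 for k < 0). -/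
/-!
Expanding along the first row, `q_j = ∑ μᵢ Dᵢ₊ⱼ`, where `Dₘ` is the determinant whose first row is
`(t_c ^ m)_c`. Both `m ↦ Dₘ` and `m ↦ Δ h_{m-n+1}` are annihilated, in degrees `m ≥ n`, by the
operator `∏_c (1 - t_c T)` with `T` the backward shift: the first because every `t_c` is a root of
`∏_j (y - t_j)`, the second because `h_k` is the coefficient sequence of `∏_c (1 - t_c X)⁻¹`.
The two sequences agree for `m < n` (two equal rows, resp. the Vandermonde determinant at
`m = n - 1`), so they agree everywhere.
-/

open MvPolynomial

/-- `q_i`: the determinant of the `n × n` matrix whose first row is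
`(F(t₁)t₁^i, …, F(t_n)t_n^i)` and whose `r`-th row (`1 ≤ r ≤ n−1`, 0-based) is
`(t₁^{n−1−r}, …, t_n^{n−1−r})`. -/
noncomputable def qdet (n : ℕ) (F : Polynomial ℚ) (i : ℕ) : MvPolynomial (Fin n) ℚ :=
  (Matrix.of fun r c : Fin n =>
    if (r : ℕ) = 0 then Polynomial.aeval (X c) F * X c ^ i
    else X c ^ (n - 1 - (r : ℕ))).det

/-- The Vandermonde determinant `Δ = ∏_{i<j} (t_i − t_j)`. -/
noncomputable def vander (n : ℕ) : MvPolynomial (Fin n) ℚ :=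
  ∏ ij ∈ Finset.univ.filter (fun ij : Fin n × Fin n => ij.1 < ij.2), (X ij.1 - X ij.2)

/-- The complete homogeneous symmetric polynomial of degree `k` in `t₁, …, t_n`:
the sum of all monomials of total degree `k`. -/
noncomputable def completeHomog (n k : ℕ) : MvPolynomial (Fin n) ℚ :=
  ∑ d ∈ Finset.Nat.antidiagonalTuple n k, ∏ i : Fin n, X i ^ d i

/-- `h_k` for an integer `k`, with the convention `h_k = 0` for `k < 0`. -/
noncomputable def hInt (n : ℕ) (k : ℤ) : MvPolynomial (Fin n) ℚ :=
  if k < 0 then 0 else completeHomog n k.toNat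

open Finset Matrix
open PowerSeries (mk coeff)

section VietaRecurrence

variable {R M N : Type*} [CommRing R] [AddCommGroup M] [Module R M] [AddCommGroup N] [Module R N]
  {σ : Type*} [Fintype σ]

/-- `∑ₖ (-1)ᵏ eₖ(x) a (m - k)`: the operator `∏ⱼ (1 - xⱼ T)`, `T` the backward shift, applied to
`a`. -/
def vietaSum (x : σ → R) (a : ℕ → M) (m : ℕ) : M :=
  ∑ S ∈ (univ : Finset σ).powerset, ((-1) ^ #S * ∏ j ∈ S, x j) • a (m - #S)

variable (x : σ → R)

theorem map_vietaSum (L : M →ₗ[R] N) (a : ℕ → M) (m : ℕ) :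
    L (vietaSum x a m) = vietaSum x (fun k => L (a k)) m := by
  simp only [vietaSum, map_sum, map_smul]

theorem vietaSum_sub (a b : ℕ → M) (m : ℕ) :
    vietaSum x (a - b) m = vietaSum x a m - vietaSum x b m := by
  simp only [vietaSum, Pi.sub_apply, smul_sub, sum_sub_distrib]

theorem vietaSum_pow (y : R) {m : ℕ} (hm : Fintype.card σ ≤ m) :
    vietaSum x (y ^ ·) m = y ^ (m - Fintype.card σ) * ∏ j, (y - x j) := by
  classical
  rw [vietaSum]
  simp_rw [sub_eq_neg_add, prod_add, mul_sum, prod_const, prod_neg, smul_eq_mul]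
  refine sum_congr rfl fun S hS => ?_
  have hcard : #S ≤ Fintype.card σ := card_le_univ S
  rw [card_sdiff_of_subset (mem_powerset.mp hS), card_univ,
    show m - #S = (m - Fintype.card σ) + (Fintype.card σ - #S) by omega, pow_add]
  ring

theorem eq_zero_of_vietaSum_eq_zero {a : ℕ → M}
    (h : ∀ m, Fintype.card σ ≤ m → vietaSum x a m = 0) (h₀ : ∀ m < Fintype.card σ, a m = 0) :
    a = 0 := by
  classical
  funext m
  induction m using Nat.strong_induction_on with | _ m ih =>
  rcases lt_or_ge m (Fintype.card σ) with hm | hm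
  · exact h₀ m hm
  have hsplit := h m hm
  rw [vietaSum, ← add_sum_erase _ _ (empty_mem_powerset _)] at hsplit
  have htail : ∑ S ∈ (univ : Finset σ).powerset.erase ∅,
      ((-1) ^ #S * ∏ j ∈ S, x j) • a (m - #S) = 0 := by
    refine sum_eq_zero fun S hS => ?_
    have hpos : 0 < #S := card_pos.mpr (nonempty_iff_ne_empty.mpr (mem_erase.mp hS).1)
    have hle : #S ≤ Fintype.card σ := card_le_univ S
    rw [ih (m - #S) (by omega), Pi.zero_apply, smul_zero]
  simpa only [card_empty, pow_zero, prod_empty, mul_one, one_smul, Nat.sub_zero, htail,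
    add_zero, Pi.zero_apply] using hsplit

theorem eq_of_vietaSum_eq_zero {a b : ℕ → M}
    (ha : ∀ m, Fintype.card σ ≤ m → vietaSum x a m = 0)
    (hb : ∀ m, Fintype.card σ ≤ m → vietaSum x b m = 0)
    (hab : ∀ m < Fintype.card σ, a m = b m) : a = b :=
  sub_eq_zero.mp <| eq_zero_of_vietaSum_eq_zero x
    (fun m hm => by rw [vietaSum_sub, ha m hm, hb m hm, sub_zero])
    (fun m hm => sub_eq_zero.mpr (hab m hm))

end VietaRecurrence

section GeometricSeries

variable {R : Type*} [CommRing R]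

theorem PowerSeries.one_sub_C_mul_X_mul_mk_pow (a : R) : (1 - C a * X) * mk (a ^ ·) = 1 := by
  rw [mul_comm]
  simpa [rescale_mk, rescale_X] using congrArg (rescale a) (mk_one_mul_one_sub_eq_one R)

theorem PowerSeries.coeff_prod_mk_pow {n : ℕ} (x : Fin n → R) (k : ℕ) :
    coeff k (∏ i, mk (x i ^ ·)) = ∑ d ∈ Nat.antidiagonalTuple n k, ∏ i, x i ^ d i := by
  classical
  rw [coeff_prod, ← piAntidiag_univ_fin_eq_antidiagonalTuple, finsuppAntidiag, sum_map,
    ← sum_attach (piAntidiag univ k)]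
  simp only [coeff_mk]
  rfl

theorem PowerSeries.prod_one_sub_C_mul_X {σ : Type*} [Fintype σ] (x : σ → R) :
    ∏ j, (1 - C (x j) * X) = ∑ S ∈ (univ : Finset σ).powerset,
      C ((-1) ^ #S * ∏ j ∈ S, x j) * X ^ #S := by
  classical
  simp_rw [sub_eq_neg_add, prod_add, prod_const_one, mul_one, prod_neg, prod_mul_distrib,
    prod_const, ← map_prod, map_mul, map_pow, map_neg, map_one, mul_assoc]

variable {σ : Type*} [Fintype σ] (x : σ → R)

theorem vietaSum_coeff (P : PowerSeries R) {m : ℕ} (hm : Fintype.card σ ≤ m) :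
    vietaSum x (fun k => coeff k P) m =
      coeff m ((∏ j, (1 - PowerSeries.C (x j) * PowerSeries.X)) * P) := by
  rw [PowerSeries.prod_one_sub_C_mul_X, sum_mul, map_sum, vietaSum]
  refine sum_congr rfl fun S _ => ?_
  rw [mul_assoc, PowerSeries.coeff_C_mul, PowerSeries.coeff_X_pow_mul',
    if_pos ((card_le_univ S).trans hm), smul_eq_mul]

theorem vietaSum_coeff_X_pow_mul_prod_mk_pow {m : ℕ} (hσ : 0 < Fintype.card σ)
    (hm : Fintype.card σ ≤ m) :
    vietaSum x (fun k => coeff k (PowerSeries.X ^ (Fintype.card σ - 1) * ∏ i, mk (x i ^ ·))) m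
      = 0 := by
  rw [vietaSum_coeff x _ hm, mul_left_comm, ← prod_mul_distrib]
  simp_rw [PowerSeries.one_sub_C_mul_X_mul_mk_pow, prod_const_one, mul_one]
  rw [PowerSeries.coeff_X_pow, if_neg (by omega)]

end GeometricSeries

section FirstRowDet

variable {R : Type*} [CommRing R] {n : ℕ}

theorem transpose_projVandermonde_one_apply (x : Fin n → R) (r c : Fin n) :
    (projVandermonde 1 x)ᵀ r c = x c ^ (n - 1 - r) := by
  rw [transpose_apply, projVandermonde_apply, Pi.one_apply, one_pow, one_mul, Fin.val_rev]
  congr 1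
  omega

variable [NeZero n]

/-- The determinant of the `qdet`-shaped matrix with rows `(x c ^ (n - 1 - r))_c`, as a linear
function of its first row. -/
noncomputable def firstRowDet (x : Fin n → R) : (Fin n → R) →ₗ[R] R :=
  detRowAlternating.toMultilinearMap.toLinearMap (projVandermonde 1 x)ᵀ 0

variable (x : Fin n → R)

theorem firstRowDet_apply (v : Fin n → R) :
    firstRowDet x v = ((projVandermonde 1 x)ᵀ.updateRow 0 v).det := rfl

theorem firstRowDet_pow_of_lt {m : ℕ} (hm : m + 1 < n) :
    firstRowDet x (fun c => x c ^ m) = 0 := by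
  have hrow : (fun c => x c ^ m) = (projVandermonde 1 x)ᵀ ⟨n - 1 - m, by omega⟩ := by
    funext c
    rw [transpose_projVandermonde_one_apply]
    congr 1
    simp only
    omega
  rw [firstRowDet_apply, hrow]
  exact det_updateRow_eq_zero (Fin.ne_of_val_ne (by simp; omega))

theorem firstRowDet_pow_pred :
    firstRowDet x (fun c => x c ^ (n - 1)) = (projVandermonde 1 x).det := by
  have hrow : (fun c => x c ^ (n - 1)) = (projVandermonde 1 x)ᵀ 0 := by
    funext c
    rw [transpose_projVandermonde_one_apply, Fin.val_zero, Nat.sub_zero]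
  rw [firstRowDet_apply, hrow, updateRow_eq_self, det_transpose]

theorem vietaSum_firstRowDet_pow {m : ℕ} (hm : n ≤ m) :
    vietaSum x (fun k => firstRowDet x (fun c => x c ^ k)) m = 0 := by
  rw [← map_vietaSum]
  convert map_zero (firstRowDet x)
  funext c
  have h := map_vietaSum x (LinearMap.proj (R := R) c) (fun k c => x c ^ k) m
  simp only [LinearMap.proj_apply] at h
  rw [Pi.zero_apply, h, vietaSum_pow x (x c) (by simpa using hm),
    prod_eq_zero (mem_univ c) (sub_self _), mul_zero]

theorem firstRowDet_pow (m : ℕ) : firstRowDet x (fun c => x c ^ m) =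
    (projVandermonde 1 x).det * coeff m (PowerSeries.X ^ (n - 1) * ∏ i, mk (x i ^ ·)) := by
  refine congrFun (eq_of_vietaSum_eq_zero x (a := fun k => firstRowDet x (fun c => x c ^ k))
    (b := fun k =>
      (projVandermonde 1 x).det * coeff k (PowerSeries.X ^ (n - 1) * ∏ i, mk (x i ^ ·)))
    ?_ ?_ ?_) m
  · intro k hk
    exact vietaSum_firstRowDet_pow x (by simpa using hk)
  · intro k hk
    have h := map_vietaSum x (LinearMap.mulLeft R (projVandermonde 1 x).det)
      (fun k => coeff k (PowerSeries.X ^ (n - 1) * ∏ i, mk (x i ^ ·))) k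
    simp only [LinearMap.mulLeft_apply] at h
    have hgeom := vietaSum_coeff_X_pow_mul_prod_mk_pow x (by simpa using NeZero.pos n) hk
    rw [Fintype.card_fin] at hgeom
    rw [← h, hgeom, mul_zero]
  · intro k hk
    rw [Fintype.card_fin] at hk
    rw [PowerSeries.coeff_X_pow_mul']
    rcases Nat.lt_or_ge (k + 1) n with hk' | hk'
    · rw [firstRowDet_pow_of_lt x hk', if_neg (by omega), mul_zero]
    · obtain rfl : k = n - 1 := by omega
      rw [firstRowDet_pow_pred, if_pos le_rfl, Nat.sub_self,
        PowerSeries.coeff_zero_eq_constantCoeff_apply, map_prod]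
      simp

end FirstRowDet

theorem vander_eq_det_projVandermonde (n : ℕ) :
    vander n = (projVandermonde 1 (X : Fin n → MvPolynomial (Fin n) ℚ)).det := by
  rw [det_projVandermonde, vander, prod_filter, Fintype.prod_prod_type]
  refine prod_congr rfl fun i _ => ?_
  rw [← filter_lt_eq_Ioi, prod_filter]
  simp only [Pi.one_apply, one_mul]

theorem hInt_eq_coeff {n : ℕ} (hn : 0 < n) (k : ℕ) :
    hInt n ((k : ℤ) - ((n : ℤ) - 1)) =
      coeff k (PowerSeries.X ^ (n - 1) * ∏ i, mk ((X i : MvPolynomial (Fin n) ℚ) ^ ·)) := by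
  rw [PowerSeries.coeff_X_pow_mul', hInt]
  split_ifs with hneg hle hle
  · omega
  · rfl
  · rw [PowerSeries.coeff_prod_mk_pow, completeHomog]
    congr 2
    omega
  · omega

theorem qdet_eq_firstRowDet (n : ℕ) [NeZero n] (F : Polynomial ℚ) (j : ℕ) :
    qdet n F j = firstRowDet X (fun c => Polynomial.aeval (X c) F * X c ^ j) := by
  rw [firstRowDet_apply, qdet]
  congr 1
  refine Matrix.ext fun r c => ?_
  simp only [of_apply, updateRow_apply, transpose_projVandermonde_one_apply, Fin.ext_iff,
    Fin.val_zero]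

theorem stmt7_general (n : ℕ) (hn : 2 ≤ n) (d : ℕ) (μ : ℕ → ℚ) (F : Polynomial ℚ)
    (hF : F = ∑ i ∈ Finset.range (d + 1), Polynomial.C (μ i) * Polynomial.X ^ i)
    (j : ℕ) :
    qdet n F j = vander n *
      ∑ i ∈ Finset.range (d + 1),
        C (μ i) * hInt n ((i : ℤ) + (j : ℤ) - ((n : ℤ) - 1)) := by
  have : NeZero n := ⟨by omega⟩
  have hrow : (fun c => Polynomial.aeval (X c) F * X c ^ j) =
      ∑ i ∈ range (d + 1),
        (C (μ i) : MvPolynomial (Fin n) ℚ) •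
          fun c : Fin n => (X c : MvPolynomial (Fin n) ℚ) ^ (i + j) := by
    funext c
    simp [hF, sum_mul, pow_add, mul_assoc]
  rw [qdet_eq_firstRowDet, hrow, map_sum, mul_sum]
  refine sum_congr rfl fun i _ => ?_
  rw [map_smul, firstRowDet_pow, ← Nat.cast_add, hInt_eq_coeff (by omega),
    vander_eq_det_projVandermonde, smul_eq_mul, mul_left_comm]

/-- Let `n ≥ 2` and `F(t) = Σ_{i=0}^d μ_i t^i`.  For every `j ∈ {0,…,n−2}`,
`q_j = Δ · (Σ_{i=0}^d μ_i h_{i+j−(n−1)})` in `ℚ[t₁,…,t_n]`. -/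
theorem stmt7 (n : ℕ) (hn : 2 ≤ n) (d : ℕ) (μ : ℕ → ℚ) (F : Polynomial ℚ)
    (hF : F = ∑ i ∈ Finset.range (d + 1), Polynomial.C (μ i) * Polynomial.X ^ i)
    (j : ℕ) (hj : j ≤ n - 2) :
    qdet n F j = vander n *
      ∑ i ∈ Finset.range (d + 1),
        C (μ i) * hInt n ((i : ℤ) + (j : ℤ) - ((n : ℤ) - 1)) :=
  stmt7_general n hn d μ F hF j
end

section
/- Let n ≥ 3, let F ∈ ℚ[t] and let k ∈ {0,…,n−3}. Then in ℚ[t_1,…,t_n], Θ((F(t_2) − F(t_1)) · t_1^k · ∏_{j=2}^n t_j^{n−j}) = −q_k. -/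
/-!
`Θ` is linear, and expanding a determinant by the Leibniz formula gives
`Θ(∏ᵢ gᵢ(tᵢ)) = det (g_r(t_c))`, which is `q_k` for the `F(t₁)` term. In the `F(t₂)` term the
monomial has the same exponent `k` at `t₁` and at `t_{n-k}`, neither of which is `t₂`, so the
transposition of these two variables fixes it and its antisymmetrisation vanishes.
-/

open MvPolynomial

/-- The antisymmetrisation operator `Θ(p) = Σ_{σ ∈ S_n} sign(σ) · σ∗p`, where
`σ∗p` permutes the variables of `p` by `σ`. -/
noncomputable def theta (n : ℕ) (p : MvPolynomial (Fin n) ℚ) : MvPolynomial (Fin n) ℚ :=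
  ∑ σ : Equiv.Perm (Fin n), (Equiv.Perm.sign σ : ℤ) • rename σ p

section Antisymmetrisation

variable {n : ℕ}

theorem theta_sub (p q : MvPolynomial (Fin n) ℚ) : theta n (p - q) = theta n p - theta n q := by
  simp only [theta, map_sub, smul_sub, Finset.sum_sub_distrib]

/-- Precomposing with a transposition `τ` fixing `p` pairs `σ` with `σ * τ`, so `Θ p = -Θ p`. -/
theorem theta_eq_zero_of_rename_swap {p : MvPolynomial (Fin n) ℚ} {a b : Fin n} (hab : a ≠ b)
    (hp : rename (Equiv.swap a b) p = p) : theta n p = 0 := by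
  refine self_eq_neg.mp ?_
  rw [theta, ← Finset.sum_neg_distrib]
  refine Fintype.sum_equiv (Equiv.mulRight (Equiv.swap a b)) _ _ fun σ => ?_
  rw [Equiv.coe_mulRight, Equiv.Perm.sign_mul, Equiv.Perm.sign_swap hab, Equiv.Perm.coe_mul,
    ← rename_rename, hp]
  simp

theorem theta_prod_aeval (g : Fin n → Polynomial ℚ) :
    theta n (∏ i, Polynomial.aeval (X i) (g i)) =
      (Matrix.of fun r c : Fin n => Polynomial.aeval (X c : MvPolynomial (Fin n) ℚ) (g r)).det := by
  rw [← Matrix.det_transpose, Matrix.det_apply, theta]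
  refine Finset.sum_congr rfl fun σ _ => ?_
  simp [map_prod, ← Polynomial.aeval_algHom_apply, Units.smul_def]

end Antisymmetrisation

section Monomials

variable {ι R : Type*} [Fintype ι] [CommSemiring R]

theorem rename_prod_X_pow_of_forall_eq (σ : Equiv.Perm ι) {e : ι → ℕ}
    (he : ∀ c, e (σ c) = e c) :
    rename σ (∏ c, X c ^ e c : MvPolynomial ι R) = ∏ c, X c ^ e c := by
  simp only [map_prod, map_pow, rename_X]
  conv_rhs => rw [← Equiv.prod_comp σ]
  simp only [he]

theorem aeval_X_mul_prod_X_pow [DecidableEq ι] (F : Polynomial R) (i : ι) (e : ι → ℕ) :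
    Polynomial.aeval (X i) F * ∏ c, (X c ^ e c : MvPolynomial ι R) =
      ∏ c, Polynomial.aeval (X c)
        (if c = i then F * Polynomial.X ^ e c else Polynomial.X ^ e c) := by
  rw [← Finset.mul_prod_erase _ _ (Finset.mem_univ i),
    ← Finset.mul_prod_erase _ _ (Finset.mem_univ i), if_pos rfl, ← mul_assoc]
  congr 1
  · simp
  · refine Finset.prod_congr rfl fun c hc => ?_
    rw [if_neg (Finset.ne_of_mem_erase hc)]
    simp

end Monomials

theorem apply_swap_apply_of_apply_eq {α β : Type*} [DecidableEq α] {f : α → β} {a b : α}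
    (hab : f a = f b) (x : α) : f (Equiv.swap a b x) = f x := by
  rcases eq_or_ne x a with rfl | hxa
  · rw [Equiv.swap_apply_left, hab]
  rcases eq_or_ne x b with rfl | hxb
  · rw [Equiv.swap_apply_right, hab]
  · rw [Equiv.swap_apply_of_ne_of_ne hxa hxb]

/-- Let `n ≥ 3`, `F ∈ ℚ[t]` and `k ∈ {0,…,n−3}`.  Then
`Θ((F(t₂) − F(t₁)) · t₁^k · ∏_{j=2}^n t_j^{n−j}) = −q_k` in `ℚ[t₁,…,t_n]`. -/
theorem stmt12 (n : ℕ) (F : Polynomial ℚ) (k : ℕ) (hk : k + 3 ≤ n) :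
    theta n ((Polynomial.aeval (X (⟨1, by omega⟩ : Fin n)) F
        - Polynomial.aeval (X (⟨0, by omega⟩ : Fin n)) F)
      * ∏ c : Fin n, X c ^ (if (c : ℕ) = 0 then k else n - 1 - (c : ℕ)))
      = -qdet n F k := by
  set e : Fin n → ℕ := fun c => if (c : ℕ) = 0 then k else n - 1 - (c : ℕ)
  set i₀ : Fin n := ⟨0, by omega⟩
  set i₁ : Fin n := ⟨1, by omega⟩
  set j : Fin n := ⟨n - 1 - k, by omega⟩
  have hej : e i₀ = e j := by simp only [e, i₀, j]; split_ifs <;> omega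
  have hvanish : theta n (Polynomial.aeval (X i₁) F * ∏ c, X c ^ e c) = 0 := by
    refine theta_eq_zero_of_rename_swap (a := i₀) (b := j) (by simp [i₀, j, Fin.ext_iff]; omega) ?_
    have hi₁ : Equiv.swap i₀ j i₁ = i₁ :=
      Equiv.swap_apply_of_ne_of_ne (by simp [i₀, i₁, Fin.ext_iff]) (by simp [i₁, j, Fin.ext_iff]; omega)
    rw [map_mul, ← Polynomial.aeval_algHom_apply, rename_X, hi₁,
      rename_prod_X_pow_of_forall_eq _ (apply_swap_apply_of_apply_eq hej)]
  have hdet : theta n (Polynomial.aeval (X i₀) F * ∏ c, X c ^ e c) = qdet n F k := by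
    rw [aeval_X_mul_prod_X_pow, theta_prod_aeval, qdet]
    congr 1
    ext r c
    simp only [Matrix.of_apply, i₀, Fin.ext_iff, e]
    split_ifs <;> simp
  rw [sub_mul, theta_sub, hvanish, hdet, zero_sub]
end
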